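/- For all real β > 0, γ > 0 and b ∈ ℝ, the absolutely convergent integral ∫₀^∞ x·exp(-β·√(γ² + x²))·sin(b·x) dx equals β·b·γ²·K₂(γ·√(β² + b²)) / (β² + b²). -/

import Mathlib

/-!
Substituting `x = γ sinh t` turns the integral into
`(γ²/2) ∫₀^∞ sinh 2t · e^{-γβ cosh t} sin(γb sinh t) dt`. Write `β + ib = r e^{iθ}`; as `β > 0`,
`|θ| < π/2`. The integrand is then the imaginary part of `sinh(2w) exp(-γr cosh(w - iθ))` on the
real axis. Moving the ray of integration from `Im w = 0` to `Im w = θ` changes the integral only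
by an integral over the segment `[0, iθ]`, on which this kernel is purely imaginary; so the
imaginary part of the integral is unchanged. On `Im w = θ` that imaginary part is
`sin 2θ · cosh 2t · e^{-γr cosh t}`, whose integral is `sin 2θ · K₂(γr)`.
-/

open MeasureTheory Real Set

/-- The modified Bessel function of the second kind (MacDonald function),
`K_ν(z) = ∫₀^∞ exp(-z cosh t) cosh(ν t) dt`. -/
noncomputable def besselK (ν z : ℝ) : ℝ :=
  ∫ t in Set.Ioi (0 : ℝ), Real.exp (-z * Real.cosh t) * Real.cosh (ν * t)

open Filter Topology

lemma exp_mul_sub_mul_cosh_le (a : ℝ) {δ t : ℝ} (hδ : 0 < δ) (ht : 0 ≤ t) :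
    rexp (a * t - δ * cosh t) ≤ rexp (2 * a ^ 2 / δ) * rexp (-(δ / 8) * t ^ 2) := by
  have hcosh : t ^ 2 / 4 ≤ cosh t := by
    have := Real.quadratic_le_exp_of_nonneg ht
    rw [cosh_eq]
    nlinarith [exp_pos (-t)]
  have hamgm : a * t ≤ δ / 8 * t ^ 2 + 2 * a ^ 2 / δ := by
    have hsq : δ / 8 * t ^ 2 + 2 * a ^ 2 / δ - a * t = (δ * t - 4 * a) ^ 2 / (8 * δ) := by
      field_simp
      ring
    have : 0 ≤ (δ * t - 4 * a) ^ 2 / (8 * δ) := by positivity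
    linarith
  rw [← exp_add, exp_le_exp]
  nlinarith

lemma integrableOn_exp_mul_sub_mul_cosh (a : ℝ) {δ : ℝ} (hδ : 0 < δ) :
    IntegrableOn (fun t => rexp (a * t - δ * cosh t)) (Ioi 0) := by
  refine ((integrable_exp_neg_mul_sq (by positivity : 0 < δ / 8)).const_mul
    (rexp (2 * a ^ 2 / δ))).integrableOn.mono' (by fun_prop) ?_
  filter_upwards [ae_restrict_mem measurableSet_Ioi] with t ht
  rw [norm_of_nonneg (exp_pos _).le, neg_mul]
  exact (exp_mul_sub_mul_cosh_le a hδ (le_of_lt ht)).trans_eq (by ring_nf)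

lemma tendsto_exp_mul_sub_mul_cosh (a : ℝ) {δ : ℝ} (hδ : 0 < δ) :
    Tendsto (fun t => rexp (a * t - δ * cosh t)) atTop (𝓝 0) := by
  have hgauss : Tendsto (fun t : ℝ => rexp (2 * a ^ 2 / δ) * rexp (-(δ / 8) * t ^ 2))
      atTop (𝓝 0) := by
    have := tendsto_exp_atBot.comp <| (tendsto_pow_atTop two_ne_zero).const_mul_atTop_of_neg
      (by linarith : -(δ / 8) < 0)
    simpa using this.const_mul (rexp (2 * a ^ 2 / δ))
  refine squeeze_zero' (.of_forall fun t => (exp_pos _).le) ?_ hgauss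
  filter_upwards [eventually_ge_atTop 0] with t ht
  exact exp_mul_sub_mul_cosh_le a hδ ht

section HorizontalRays

open Complex

variable {g : ℂ → ℂ} {U : Set ℝ} {bound : ℝ → ℝ}

lemma integrableOn_Ioi_comp_add_mul_I (hg : Continuous g) (hbound : IntegrableOn bound (Ioi 0))
    {y : ℝ} (hle : ∀ t : ℝ, 0 ≤ t → ‖g (t + y * I)‖ ≤ bound t) :
    IntegrableOn (fun t : ℝ => g (t + y * I)) (Ioi 0) := by
  refine hbound.mono' (by fun_prop) ?_
  filter_upwards [ae_restrict_mem measurableSet_Ioi] with t ht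
  exact hle t (le_of_lt ht)

lemma hasDerivAt_integral_Ioi_comp_add_mul_I (hg : Differentiable ℂ g) (hU : IsOpen U)
    (hbound : IntegrableOn bound (Ioi 0)) (hbound_lim : Tendsto bound atTop (𝓝 0))
    (hg_le : ∀ y ∈ U, ∀ t : ℝ, 0 ≤ t → ‖g (t + y * I)‖ ≤ bound t)
    (hg'_le : ∀ y ∈ U, ∀ t : ℝ, 0 ≤ t → ‖deriv g (t + y * I)‖ ≤ bound t)
    {y₀ : ℝ} (hy₀ : y₀ ∈ U) :
    HasDerivAt (fun y : ℝ => ∫ t : ℝ in Ioi 0, g (t + y * I)) (-I * g (y₀ * I)) y₀ := by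
  have hg_cont : Continuous g := hg.continuous
  have hg' : Continuous (deriv g) := (hg.contDiff (n := 1)).continuous_deriv le_rfl
  have hderiv_t : ∀ t : ℝ, HasDerivAt (fun t : ℝ => g (t + y₀ * I)) (deriv g (t + y₀ * I)) t :=
    fun t => by
      simpa using
        ((hg _).hasDerivAt.comp (t : ℂ) ((hasDerivAt_id _).add_const (y₀ * I))).comp_ofReal
  have hderiv_y : ∀ t y : ℝ,
      HasDerivAt (fun y : ℝ => g (t + y * I)) (I * deriv g (t + y * I)) y := fun t y => by
    have := ((hg _).hasDerivAt.comp (y : ℂ)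
      (((hasDerivAt_id (y : ℂ)).mul_const I).const_add (t : ℂ))).comp_ofReal
    simpa [mul_comm] using this
  have hint_deriv : ∫ t : ℝ in Ioi 0, deriv g (t + y₀ * I) = -g (y₀ * I) := by
    have hlim : Tendsto (fun t : ℝ => g (t + y₀ * I)) atTop (𝓝 0) :=
      squeeze_zero_norm' (eventually_ge_atTop 0 |>.mono (hg_le y₀ hy₀)) hbound_lim
    rw [integral_Ioi_of_hasDerivAt_of_tendsto' (fun t _ => hderiv_t t)
      (integrableOn_Ioi_comp_add_mul_I hg' hbound (hg'_le y₀ hy₀)) hlim]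
    simp
  have key := hasDerivAt_integral_of_dominated_loc_of_deriv_le (μ := volume.restrict (Ioi 0))
    (F' := fun y t => I * deriv g (t + y * I)) (hU.mem_nhds hy₀)
    (.of_forall fun y => (by fun_prop : Continuous fun t : ℝ => g (t + y * I)).aestronglyMeasurable)
    (integrableOn_Ioi_comp_add_mul_I hg.continuous hbound (hg_le y₀ hy₀))
    (by fun_prop : Continuous fun t : ℝ => I * deriv g (t + y₀ * I)).aestronglyMeasurable
    (by
      filter_upwards [ae_restrict_mem measurableSet_Ioi] with t ht y hy
      simpa using hg'_le y hy t (le_of_lt ht))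
    hbound (.of_forall fun t y _ => hderiv_y t y)
  rw [integral_const_mul, hint_deriv] at key
  simpa using key.2

/-- Cauchy's theorem for the half-strip between the rays `Im w = y₁` and `Im w = y₂`. -/
theorem integral_Ioi_comp_add_mul_I_sub (hg : Differentiable ℂ g) (hU : IsOpen U)
    (hbound : IntegrableOn bound (Ioi 0)) (hbound_lim : Tendsto bound atTop (𝓝 0))
    (hg_le : ∀ y ∈ U, ∀ t : ℝ, 0 ≤ t → ‖g (t + y * I)‖ ≤ bound t)
    (hg'_le : ∀ y ∈ U, ∀ t : ℝ, 0 ≤ t → ‖deriv g (t + y * I)‖ ≤ bound t)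
    {y₁ y₂ : ℝ} (hsub : uIcc y₁ y₂ ⊆ U) :
    (∫ t : ℝ in Ioi 0, g (t + y₂ * I)) - ∫ t : ℝ in Ioi 0, g (t + y₁ * I)
      = -I * ∫ y in y₁..y₂, g (y * I) := by
  have hg_cont : Continuous g := hg.continuous
  rw [← intervalIntegral.integral_const_mul]
  refine (intervalIntegral.integral_eq_sub_of_hasDerivAt
    (f := fun y : ℝ => ∫ t : ℝ in Ioi 0, g (t + y * I)) (fun y hy => ?_) ?_).symm
  · exact hasDerivAt_integral_Ioi_comp_add_mul_I hg hU hbound hbound_lim hg_le hg'_le (hsub hy)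
  · exact (by fun_prop : Continuous fun y : ℝ => -I * g (y * I)).intervalIntegrable _ _

end HorizontalRays

namespace Complex

lemma cosh_re (z : ℂ) : (cosh z).re = Real.cosh z.re * Real.cos z.im := by
  obtain ⟨x, y, rfl⟩ : ∃ x y : ℝ, z = x + y * I := ⟨z.re, z.im, (re_add_im z).symm⟩
  simp [cosh_add, cosh_mul_I, sinh_mul_I, ← ofReal_cosh, ← ofReal_sinh, ← ofReal_cos, ← ofReal_sin]

lemma cosh_im (z : ℂ) : (cosh z).im = Real.sinh z.re * Real.sin z.im := by
  obtain ⟨x, y, rfl⟩ : ∃ x y : ℝ, z = x + y * I := ⟨z.re, z.im, (re_add_im z).symm⟩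
  simp [cosh_add, cosh_mul_I, sinh_mul_I, ← ofReal_cosh, ← ofReal_sinh, ← ofReal_cos, ← ofReal_sin]

lemma sinh_re (z : ℂ) : (sinh z).re = Real.sinh z.re * Real.cos z.im := by
  obtain ⟨x, y, rfl⟩ : ∃ x y : ℝ, z = x + y * I := ⟨z.re, z.im, (re_add_im z).symm⟩
  simp [sinh_add, cosh_mul_I, sinh_mul_I, ← ofReal_cosh, ← ofReal_sinh, ← ofReal_cos, ← ofReal_sin]

lemma sinh_im (z : ℂ) : (sinh z).im = Real.cosh z.re * Real.sin z.im := by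
  obtain ⟨x, y, rfl⟩ : ∃ x y : ℝ, z = x + y * I := ⟨z.re, z.im, (re_add_im z).symm⟩
  simp [sinh_add, cosh_mul_I, sinh_mul_I, ← ofReal_cosh, ← ofReal_sinh, ← ofReal_cos, ← ofReal_sin]

lemma norm_cosh_le (z : ℂ) : ‖cosh z‖ ≤ Real.cosh z.re := by
  rw [← sq_le_sq₀ (norm_nonneg _) (Real.cosh_pos _).le, ← normSq_eq_norm_sq, normSq_apply,
    cosh_re, cosh_im]
  have : (Real.cosh z.re * Real.cos z.im) * (Real.cosh z.re * Real.cos z.im)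
      + (Real.sinh z.re * Real.sin z.im) * (Real.sinh z.re * Real.sin z.im)
      = Real.cosh z.re ^ 2 - Real.sin z.im ^ 2 := by
    linear_combination (Real.cosh z.re) ^ 2 * Real.sin_sq_add_cos_sq z.im
      - (Real.sin z.im) ^ 2 * Real.cosh_sq z.re
  nlinarith [sq_nonneg (Real.sin z.im)]

lemma norm_sinh_le (z : ℂ) : ‖sinh z‖ ≤ Real.cosh z.re := by
  rw [← sq_le_sq₀ (norm_nonneg _) (Real.cosh_pos _).le, ← normSq_eq_norm_sq, normSq_apply,
    sinh_re, sinh_im]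
  have : (Real.sinh z.re * Real.cos z.im) * (Real.sinh z.re * Real.cos z.im)
      + (Real.cosh z.re * Real.sin z.im) * (Real.cosh z.re * Real.sin z.im)
      = Real.cosh z.re ^ 2 - Real.cos z.im ^ 2 := by
    linear_combination (Real.cosh z.re) ^ 2 * Real.sin_sq_add_cos_sq z.im
      - (Real.cos z.im) ^ 2 * Real.cosh_sq z.re
  nlinarith [sq_nonneg (Real.cos z.im)]

lemma norm_exp_neg_mul_cosh (c : ℝ) (z : ℂ) :
    ‖exp (-c * cosh z)‖ = rexp (-(c * Real.cos z.im * Real.cosh z.re)) := by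
  rw [norm_exp, neg_mul, neg_re, re_ofReal_mul, cosh_re]
  ring_nf

end Complex

lemma Real.cosh_le_exp_abs (x : ℝ) : cosh x ≤ rexp |x| := by
  rw [← cosh_abs, cosh_eq]
  linarith [exp_le_exp.2 (by linarith [abs_nonneg x] : -|x| ≤ |x|)]

section Kernel

open Complex

/-- On the real axis the imaginary part of this kernel is the integrand
`sinh (ν t) e^{-c cos θ cosh t} sin (c sin θ sinh t)`; on the line `Im w = θ` it is `sin (ν θ)`
times the integrand of `besselK ν c`. -/
noncomputable def besselKKernel (ν c θ : ℝ) (w : ℂ) : ℂ :=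
  sinh (ν * w) * exp (-c * cosh (w - θ * I))

variable {ν c θ : ℝ}

lemma hasDerivAt_besselKKernel (w : ℂ) :
    HasDerivAt (besselKKernel ν c θ)
      (ν * cosh (ν * w) * exp (-c * cosh (w - θ * I))
        - c * sinh (ν * w) * sinh (w - θ * I) * exp (-c * cosh (w - θ * I))) w := by
  have hlin : HasDerivAt (fun w : ℂ => ν * w) ν w := by
    simpa using (hasDerivAt_id w).const_mul (ν : ℂ)
  have hexp := (((hasDerivAt_id w).sub_const (θ * I)).ccosh.const_mul (-c : ℂ)).cexp
  unfold besselKKernel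
  exact (hlin.csinh.mul hexp).congr_deriv (by simp only [id]; ring)

lemma differentiable_besselKKernel : Differentiable ℂ (besselKKernel ν c θ) :=
  fun w => hasDerivAt_besselKKernel w |>.differentiableAt

lemma norm_exp_neg_mul_cosh_add_mul_I_sub (t y : ℝ) :
    ‖exp (-c * cosh (t + y * I - θ * I))‖ = rexp (-(c * Real.cos (y - θ) * Real.cosh t)) := by
  simpa using norm_exp_neg_mul_cosh c (t + y * I - θ * I)

lemma norm_sinh_mul_add_mul_I_le {t : ℝ} (y : ℝ) (ht : 0 ≤ t) :
    ‖sinh (ν * (t + y * I))‖ ≤ rexp (|ν| * t) := by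
  refine (norm_sinh_le _).trans ?_
  simpa [abs_mul, abs_of_nonneg ht] using Real.cosh_le_exp_abs (ν * t)

lemma norm_cosh_mul_add_mul_I_le {t : ℝ} (y : ℝ) (ht : 0 ≤ t) :
    ‖cosh (ν * (t + y * I))‖ ≤ rexp (|ν| * t) := by
  refine (norm_cosh_le _).trans ?_
  simpa [abs_mul, abs_of_nonneg ht] using Real.cosh_le_exp_abs (ν * t)

lemma norm_besselKKernel_le {t : ℝ} (y : ℝ) (ht : 0 ≤ t) (hc : 0 ≤ c) :
    ‖besselKKernel ν c θ (t + y * I)‖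
      ≤ (1 + |ν| + c) * rexp ((|ν| + 1) * t - c * Real.cos (y - θ) * Real.cosh t) := by
  rw [show (|ν| + 1) * t - c * Real.cos (y - θ) * Real.cosh t
      = |ν| * t + t + -(c * Real.cos (y - θ) * Real.cosh t) by ring, Real.exp_add, Real.exp_add,
    besselKKernel, norm_mul, norm_exp_neg_mul_cosh_add_mul_I_sub]
  calc _ = 1 * (‖sinh (ν * (t + y * I))‖ * 1 * rexp (-(c * Real.cos (y - θ) * Real.cosh t))) := by
        ring
    _ ≤ _ := by
        gcongr
        · linarith [abs_nonneg ν]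
        · exact norm_sinh_mul_add_mul_I_le y ht
        · exact one_le_exp ht

lemma norm_deriv_besselKKernel_le {t : ℝ} (y : ℝ) (ht : 0 ≤ t) (hc : 0 ≤ c) :
    ‖deriv (besselKKernel ν c θ) (t + y * I)‖
      ≤ (1 + |ν| + c) * rexp ((|ν| + 1) * t - c * Real.cos (y - θ) * Real.cosh t) := by
  have hsinh : ‖sinh (t + y * I - θ * I)‖ ≤ rexp t := by
    refine (norm_sinh_le _).trans ?_
    simpa [abs_of_nonneg ht] using Real.cosh_le_exp_abs t
  have hA := norm_sinh_mul_add_mul_I_le (ν := ν) y ht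
  have hA' := norm_cosh_mul_add_mul_I_le (ν := ν) y ht
  have hB : 1 ≤ rexp t := one_le_exp ht
  have hX := exp_pos (-(c * Real.cos (y - θ) * Real.cosh t))
  have hAB := mul_pos (exp_pos (|ν| * t)) hX
  rw [show (|ν| + 1) * t - c * Real.cos (y - θ) * Real.cosh t
      = |ν| * t + t + -(c * Real.cos (y - θ) * Real.cosh t) by ring, Real.exp_add, Real.exp_add,
    (hasDerivAt_besselKKernel _).deriv]
  refine (norm_sub_le _ _).trans ?_
  simp only [norm_mul, norm_exp_neg_mul_cosh_add_mul_I_sub, norm_real, Real.norm_eq_abs,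
    abs_of_nonneg hc]
  calc _ ≤ |ν| * rexp (|ν| * t) * rexp (-(c * Real.cos (y - θ) * Real.cosh t))
        + c * rexp (|ν| * t) * rexp t * rexp (-(c * Real.cos (y - θ) * Real.cosh t)) := by
        gcongr
    _ ≤ _ := by
        nlinarith [mul_nonneg (mul_nonneg (abs_nonneg ν) hAB.le) (sub_nonneg.2 hB),
          mul_pos hAB (exp_pos t)]

lemma besselKKernel_ofReal_im (t : ℝ) :
    (besselKKernel ν c θ t).im
      = Real.sinh (ν * t) * rexp (-(c * Real.cos θ) * Real.cosh t)
        * Real.sin (c * Real.sin θ * Real.sinh t) := by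
  rw [besselKKernel, ← ofReal_mul, ← ofReal_sinh, im_ofReal_mul, exp_im]
  simp only [neg_mul, neg_re, mul_re, ofReal_re, cosh_re, sub_re, I_re, mul_zero, ofReal_im, I_im,
    mul_one, sub_self, sub_zero, sub_im, mul_im, add_zero, zero_sub, Real.cos_neg, cosh_im,
    Real.sin_neg, mul_neg, zero_mul, neg_zero, neg_im, neg_neg]
  ring_nf

lemma besselKKernel_add_mul_I_im (t : ℝ) :
    (besselKKernel ν c θ (t + θ * I)).im
      = Real.sin (ν * θ) * (rexp (-c * Real.cosh t) * Real.cosh (ν * t)) := by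
  rw [besselKKernel, add_sub_cancel_right, ← ofReal_cosh, ← ofReal_neg, ← ofReal_mul,
    ← ofReal_exp, im_mul_ofReal, sinh_im]
  simp only [mul_re, ofReal_re, add_re, I_re, mul_zero, ofReal_im, I_im, mul_one, sub_self,
    add_zero, add_im, mul_im, zero_add, zero_mul, sub_zero, neg_mul]
  ring

lemma besselKKernel_mul_I (y : ℝ) :
    besselKKernel ν c θ (y * I) = (Real.sin (ν * y) * rexp (-c * Real.cos (y - θ)) : ℝ) * I := by
  rw [besselKKernel, ← sub_mul, ← mul_assoc, ← ofReal_mul, ← ofReal_sub, sinh_mul_I, cosh_mul_I,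
    ← ofReal_sin, ← ofReal_cos]
  push_cast
  ring

end Kernel

lemma cos_le_cos_sub_of_mem_ball {θ ρ y : ℝ} (hρ : ρ ≤ π) (hy : y ∈ Metric.ball θ ρ) :
    Real.cos ρ ≤ Real.cos (y - θ) := by
  rw [← Real.cos_abs (y - θ)]
  exact Real.cos_le_cos_of_nonneg_of_le_pi (abs_nonneg _) hρ
    (by simpa [Real.dist_eq] using (Metric.mem_ball.1 hy).le)

section

open Complex

variable {c θ : ℝ}

theorem integral_im_besselKKernel_eq_integral_im_add_mul_I (ν : ℝ) (hc : 0 < c)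
    (hθ : |θ| < π / 2) :
    IntegrableOn (fun t : ℝ => (besselKKernel ν c θ t).im) (Ioi 0) ∧
    ∫ t : ℝ in Ioi 0, (besselKKernel ν c θ t).im
      = ∫ t : ℝ in Ioi 0, (besselKKernel ν c θ (t + θ * I)).im := by
  obtain ⟨ρ, hθρ, hρ⟩ : ∃ ρ, |θ| < ρ ∧ ρ < π / 2 :=
    ⟨(|θ| + π / 2) / 2, by linarith, by linarith⟩
  have hδ : 0 < c * Real.cos ρ :=
    mul_pos hc (Real.cos_pos_of_mem_Ioo ⟨by linarith [abs_nonneg θ], by linarith⟩)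
  have hρπ : ρ ≤ π := by linarith [pi_pos]
  have hg_le : ∀ y ∈ Metric.ball θ ρ, ∀ t : ℝ, 0 ≤ t → ‖besselKKernel ν c θ (t + y * I)‖
      ≤ (1 + |ν| + c) * rexp ((|ν| + 1) * t - c * Real.cos ρ * Real.cosh t) := fun y hy t ht =>
    (norm_besselKKernel_le y ht hc.le).trans (by gcongr; exact cos_le_cos_sub_of_mem_ball hρπ hy)
  have hg'_le : ∀ y ∈ Metric.ball θ ρ, ∀ t : ℝ, 0 ≤ t → ‖deriv (besselKKernel ν c θ) (t + y * I)‖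
      ≤ (1 + |ν| + c) * rexp ((|ν| + 1) * t - c * Real.cos ρ * Real.cosh t) := fun y hy t ht =>
    (norm_deriv_besselKKernel_le y ht hc.le).trans
      (by gcongr; exact cos_le_cos_sub_of_mem_ball hρπ hy)
  have hbound_int := (integrableOn_exp_mul_sub_mul_cosh (|ν| + 1) hδ).const_mul (1 + |ν| + c)
  have hbound_lim : Tendsto (fun t => (1 + |ν| + c)
      * rexp ((|ν| + 1) * t - c * Real.cos ρ * Real.cosh t)) atTop (𝓝 0) := by
    simpa using (tendsto_exp_mul_sub_mul_cosh (|ν| + 1) hδ).const_mul (1 + |ν| + c)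
  have hsub : uIcc 0 θ ⊆ Metric.ball θ ρ := fun y hy => by
    have := abs_sub_left_of_mem_uIcc (uIcc_comm 0 θ ▸ hy)
    rw [Metric.mem_ball, Real.dist_eq]
    simp only [zero_sub, abs_neg] at this
    linarith
  have hint : ∀ y ∈ Metric.ball θ ρ,
      IntegrableOn (fun t : ℝ => besselKKernel ν c θ (t + y * I)) (Ioi 0) := fun y hy =>
    integrableOn_Ioi_comp_add_mul_I differentiable_besselKKernel.continuous hbound_int
      (hg_le y hy)
  have hint_real : IntegrableOn (fun t : ℝ => besselKKernel ν c θ t) (Ioi 0) := by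
    simpa using hint 0 (hsub left_mem_uIcc)
  have hcontour := integral_Ioi_comp_add_mul_I_sub differentiable_besselKKernel
    Metric.isOpen_ball hbound_int hbound_lim hg_le hg'_le hsub
  -- the segment `[0, iθ]` contributes `-I * (x * I) = x` with `x` real
  simp only [besselKKernel_mul_I, intervalIntegral.integral_mul_const,
    intervalIntegral.integral_ofReal, ofReal_zero, zero_mul, add_zero] at hcontour
  have him : (∫ t : ℝ in Ioi 0, besselKKernel ν c θ (t + θ * I)).im
      = (∫ t : ℝ in Ioi 0, besselKKernel ν c θ t).im := by
    simpa [sub_eq_zero, ← mul_assoc] using congrArg im hcontour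
  refine ⟨hint_real.im, ?_⟩
  calc ∫ t : ℝ in Ioi 0, (besselKKernel ν c θ t).im
      = (∫ t : ℝ in Ioi 0, besselKKernel ν c θ t).im := integral_im hint_real
    _ = ∫ t : ℝ in Ioi 0, (besselKKernel ν c θ (t + θ * I)).im :=
        him ▸ (integral_im (hint θ (hsub right_mem_uIcc))).symm

end

theorem integral_sinh_mul_exp_neg_mul_cosh_mul_sin (ν : ℝ) {c θ : ℝ} (hc : 0 < c)
    (hθ : |θ| < π / 2) :
    IntegrableOn (fun t => Real.sinh (ν * t) * rexp (-(c * Real.cos θ) * Real.cosh t)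
        * Real.sin (c * Real.sin θ * Real.sinh t)) (Ioi 0) ∧
    ∫ t in Ioi 0, Real.sinh (ν * t) * rexp (-(c * Real.cos θ) * Real.cosh t)
        * Real.sin (c * Real.sin θ * Real.sinh t) = Real.sin (ν * θ) * besselK ν c := by
  simp_rw [← besselKKernel_ofReal_im]
  obtain ⟨hint, hshift⟩ := integral_im_besselKKernel_eq_integral_im_add_mul_I ν hc hθ
  refine ⟨hint, hshift.trans ?_⟩
  simp_rw [besselKKernel_add_mul_I_im]
  rw [integral_const_mul, besselK]

section SinhSubstitution

variable {E : Type*} [NormedAddCommGroup E] [NormedSpace ℝ E] {γ : ℝ}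

lemma image_const_mul_sinh_Ioi (hγ : 0 < γ) : (fun t => γ * Real.sinh t) '' Ioi 0 = Ioi 0 := by
  ext x
  refine ⟨?_, fun hx => ⟨arsinh (x / γ), arsinh_pos_iff.2 (div_pos hx hγ), ?_⟩⟩
  · rintro ⟨t, ht, rfl⟩
    exact mul_pos hγ (Real.sinh_pos_iff.2 ht)
  · simp only [sinh_arsinh]
    field_simp

lemma hasDerivWithinAt_const_mul_sinh (t : ℝ) :
    HasDerivWithinAt (fun t => γ * Real.sinh t) (γ * Real.cosh t) (Ioi 0) t :=
  ((Real.hasDerivAt_sinh t).const_mul γ).hasDerivWithinAt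

lemma injOn_const_mul_sinh (hγ : 0 < γ) : InjOn (fun t => γ * Real.sinh t) (Ioi 0) :=
  (Real.sinh_strictMono.const_mul hγ).injective.injOn

lemma integrableOn_Ioi_iff_comp_const_mul_sinh (hγ : 0 < γ) (f : ℝ → E) :
    IntegrableOn f (Ioi 0) ↔
      IntegrableOn (fun t => (γ * Real.cosh t) • f (γ * Real.sinh t)) (Ioi 0) := by
  conv_lhs => rw [← image_const_mul_sinh_Ioi hγ]
  rw [integrableOn_image_iff_integrableOn_abs_deriv_smul measurableSet_Ioi
    (fun t _ => hasDerivWithinAt_const_mul_sinh t) (injOn_const_mul_sinh hγ)]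
  simp only [abs_of_pos (mul_pos hγ (Real.cosh_pos _))]

lemma integral_Ioi_eq_integral_comp_const_mul_sinh (hγ : 0 < γ) (f : ℝ → E) :
    ∫ x in Ioi 0, f x = ∫ t in Ioi 0, (γ * Real.cosh t) • f (γ * Real.sinh t) := by
  conv_lhs => rw [← image_const_mul_sinh_Ioi hγ]
  rw [integral_image_eq_integral_abs_deriv_smul measurableSet_Ioi
    (fun t _ => hasDerivWithinAt_const_mul_sinh t) (injOn_const_mul_sinh hγ)]
  simp only [abs_of_pos (mul_pos hγ (Real.cosh_pos _))]

end SinhSubstitution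

lemma exists_sqrt_mul_cos_eq_and_sqrt_mul_sin_eq {β : ℝ} (hβ : 0 < β) (b : ℝ) :
    ∃ θ, |θ| < π / 2 ∧ √(β ^ 2 + b ^ 2) * Real.cos θ = β ∧ √(β ^ 2 + b ^ 2) * Real.sin θ = b := by
  have hr : 0 < √(β ^ 2 + b ^ 2) := Real.sqrt_pos.2 (by positivity)
  have hnorm : ‖(β : ℂ) + b * Complex.I‖ = √(β ^ 2 + b ^ 2) := Complex.norm_add_mul_I β b
  have hne : (β : ℂ) + b * Complex.I ≠ 0 := fun h => by
    simp only [h, norm_zero] at hnorm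
    linarith
  refine ⟨Complex.arg (β + b * Complex.I),
    Complex.abs_arg_lt_pi_div_two_iff.2 (Or.inl (by simpa using hβ)), ?_, ?_⟩
  · rw [Complex.cos_arg hne, hnorm, mul_div_cancel₀ _ hr.ne']
    simp
  · rw [Complex.sin_arg, hnorm, mul_div_cancel₀ _ hr.ne']
    simp

lemma const_mul_cosh_mul_integrand_comp_const_mul_sinh {γ : ℝ} (hγ : 0 ≤ γ) (β b t : ℝ) :
    (γ * Real.cosh t) * (γ * Real.sinh t * rexp (-β * √(γ ^ 2 + (γ * Real.sinh t) ^ 2))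
        * Real.sin (b * (γ * Real.sinh t)))
      = γ ^ 2 / 2 * (Real.sinh (2 * t) * rexp (-(γ * β) * Real.cosh t)
        * Real.sin (γ * b * Real.sinh t)) := by
  have hsqrt : √(γ ^ 2 + (γ * Real.sinh t) ^ 2) = γ * Real.cosh t := by
    rw [← Real.sqrt_sq (mul_nonneg hγ (Real.cosh_pos t).le)]
    congr 1
    linear_combination (-γ ^ 2) * Real.cosh_sq t
  rw [hsqrt, Real.sinh_two_mul]
  ring_nf

/-- Gradshteyn–Ryzhik 3.915: for `β > 0`, `γ > 0`, `b ∈ ℝ`,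
`∫₀^∞ x exp(-β √(γ² + x²)) sin(b x) dx = β b γ² K₂(γ √(β² + b²)) / (β² + b²)`. -/
theorem integral_x_exp_sqrt_sin (β γ b : ℝ) (hβ : 0 < β) (hγ : 0 < γ) :
    IntegrableOn (fun x : ℝ => x * Real.exp (-β * Real.sqrt (γ ^ 2 + x ^ 2)) * Real.sin (b * x))
      (Set.Ioi 0) volume ∧
    ∫ x in Set.Ioi (0 : ℝ), x * Real.exp (-β * Real.sqrt (γ ^ 2 + x ^ 2)) * Real.sin (b * x)
      = β * b * γ ^ 2 * besselK 2 (γ * Real.sqrt (β ^ 2 + b ^ 2)) / (β ^ 2 + b ^ 2) := by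
  obtain ⟨θ, hθ, hcos, hsin⟩ := exists_sqrt_mul_cos_eq_and_sqrt_mul_sin_eq hβ b
  set r := √(β ^ 2 + b ^ 2)
  have hr2 : β ^ 2 + b ^ 2 = r ^ 2 := (Real.sq_sqrt (by positivity)).symm
  have hr : 0 < r := Real.sqrt_pos.2 (by positivity)
  have key := integral_sinh_mul_exp_neg_mul_cosh_mul_sin 2 (mul_pos hγ hr) hθ
  simp only [mul_assoc γ r, hcos, hsin] at key
  have hsubst := funext (const_mul_cosh_mul_integrand_comp_const_mul_sinh hγ.le β b)
  refine ⟨(integrableOn_Ioi_iff_comp_const_mul_sinh hγ _).2 ?_, ?_⟩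
  · simp only [smul_eq_mul, hsubst]
    exact key.1.const_mul _
  · rw [integral_Ioi_eq_integral_comp_const_mul_sinh hγ]
    simp only [smul_eq_mul, hsubst]
    rw [integral_const_mul, key.2, Real.sin_two_mul, hr2, ← hcos, ← hsin]
    field_simp
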